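/- Upper Wei duality: if M = (E, ρ) is a demimatroid with n = |E| and k = ρ(E), then {d^0(M)+1, …, d^{k−1}(M)+1} equals the complement in {1, …, n} of {n − d^0(M*), …, n − d^{n−k−1}(M*)}, where d^r(M) := max{ |X| : ρ(X) = r }. -/

import Mathlib

/-!
Let `μ m` be the least rank of an `m`-subset of `E`. It rises from `μ 0 = 0` to `μ n = k` in steps
of `0` or `1`, and `d^r` is the largest `m` with `μ m ≤ r`; hence the numbers `d^r` with `r < k` are
exactly the positions `j` where `μ (j + 1) = μ j + 1`. Complementation gives
`μ* m = m - k + μ (n - m)`, so `μ*` steps up at `j` exactly when `μ` stays flat at `n - 1 - j`: the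
jump positions of `M*` are the reflections of the non-jump positions of `M`.
-/

open Finset

/-- A demimatroid on ground set `E`. -/
def IsDemimatroid {α : Type*} [DecidableEq α] (E : Finset α) (ρ : Finset α → ℤ) : Prop :=
  ρ ∅ = 0 ∧ (∀ X ⊆ E, 0 ≤ ρ X) ∧
    ∀ X ⊆ E, ∀ x ∈ E, ρ X ≤ ρ (insert x X) ∧ ρ (insert x X) ≤ ρ X + 1
/-- The `r`-th upper Wei number `d^r(M) = max { |X| : X ⊆ E, ρ(X) = r }`. -/
noncomputable def upperWeiNumber {α : Type*} [DecidableEq α] (E : Finset α) (ρ : Finset α → ℤ)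
    (r : ℤ) : ℕ :=
  sSup {m : ℕ | ∃ X ⊆ E, ρ X = r ∧ X.card = m}

/-- The dual rank function `ρ*(X) = |X| + ρ(E \ X) - ρ(E)`. -/
def dualFn {α : Type*} [DecidableEq α] (E : Finset α) (ρ : Finset α → ℤ) : Finset α → ℤ :=
  fun X => X.card + ρ (E \ X) - ρ E

section WeiDuality

variable {α : Type*} {E : Finset α} {ρ : Finset α → ℤ}

noncomputable def minRank (E : Finset α) (ρ : Finset α → ℤ) (m : ℕ) : ℤ :=
  if h : m ≤ #E then (E.powersetCard m).inf' (powersetCard_nonempty.2 h) ρ else 0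

def IsRankJump (E : Finset α) (ρ : Finset α → ℤ) (j : ℕ) : Prop :=
  j < #E ∧ minRank E ρ (j + 1) = minRank E ρ j + 1

theorem minRank_le {X : Finset α} (hX : X ⊆ E) : minRank E ρ #X ≤ ρ X := by
  rw [minRank, dif_pos (card_le_card hX)]
  exact inf'_le ρ (mem_powersetCard.2 ⟨hX, rfl⟩)

theorem exists_rank_eq_minRank {m : ℕ} (hm : m ≤ #E) :
    ∃ X ⊆ E, #X = m ∧ ρ X = minRank E ρ m := by
  obtain ⟨X, hX, hval⟩ := exists_mem_eq_inf' (powersetCard_nonempty.2 hm) ρ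
  rw [minRank, dif_pos hm]
  exact ⟨X, (mem_powersetCard.1 hX).1, (mem_powersetCard.1 hX).2, hval.symm⟩

theorem minRank_card : minRank E ρ #E = ρ E := by
  obtain ⟨X, hX, hc, hval⟩ := exists_rank_eq_minRank (ρ := ρ) le_rfl
  rw [← hval, eq_of_subset_of_card_le hX hc.ge]

theorem bddAbove_card_of_rank_eq (E : Finset α) (ρ : Finset α → ℤ) (r : ℤ) :
    BddAbove {m : ℕ | ∃ X ⊆ E, ρ X = r ∧ X.card = m} :=
  ⟨#E, fun _ ⟨_, hX, _, hc⟩ => hc ▸ card_le_card hX⟩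

section Demimatroid

variable [DecidableEq α]

theorem card_le_upperWeiNumber {X : Finset α} (hX : X ⊆ E) {r : ℤ} (hXr : ρ X = r) :
    #X ≤ upperWeiNumber E ρ r :=
  le_csSup (bddAbove_card_of_rank_eq E ρ r) ⟨X, hX, hXr, rfl⟩

theorem minRank_dualFn {m : ℕ} (hm : m ≤ #E) :
    minRank E (dualFn E ρ) m = m - ρ E + minRank E ρ (#E - m) := by
  apply le_antisymm
  · obtain ⟨Z, hZ, hcZ, hvZ⟩ := exists_rank_eq_minRank (ρ := ρ) (Nat.sub_le #E m)
    have hcEZ : #(E \ Z) = m := by rw [card_sdiff_of_subset hZ, hcZ]; omega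
    have := minRank_le (ρ := dualFn E ρ) (sdiff_subset (s := E) (t := Z))
    rw [dualFn, Finset.sdiff_sdiff_eq_self hZ, hcEZ, hvZ] at this
    linarith
  · obtain ⟨Y, hY, hcY, hvY⟩ := exists_rank_eq_minRank (ρ := dualFn E ρ) hm
    have := minRank_le (ρ := ρ) (sdiff_subset (s := E) (t := Y))
    rw [card_sdiff_of_subset hY, hcY] at this
    rw [← hvY, dualFn, hcY]
    linarith

namespace IsDemimatroid

theorem rank_union_mem_Icc (h : IsDemimatroid E ρ) {X D : Finset α} (hX : X ⊆ E) (hD : D ⊆ E) :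
    ρ (D ∪ X) ∈ Set.Icc (ρ X) (ρ X + #D) := by
  induction D using Finset.induction_on with
  | empty => simp
  | insert a D ha ih =>
    have hDE : D ⊆ E := (subset_insert a D).trans hD
    have hstep := h.2.2 (D ∪ X) (union_subset hDE hX) a (hD (mem_insert_self a D))
    obtain ⟨ih₁, ih₂⟩ := ih hDE
    rw [insert_union, card_insert_of_notMem ha]
    constructor <;> push_cast <;> linarith [hstep.1, hstep.2]

theorem rank_mono (h : IsDemimatroid E ρ) {X Y : Finset α} (hXY : X ⊆ Y) (hY : Y ⊆ E) :
    ρ X ≤ ρ Y := by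
  simpa [sdiff_union_of_subset hXY] using
    (h.rank_union_mem_Icc (hXY.trans hY) (sdiff_subset.trans hY) (D := Y \ X)).1

theorem exists_superset_rank_eq (h : IsDemimatroid E ρ) {X : Finset α} (hX : X ⊆ E) {r : ℤ}
    (hXr : ρ X ≤ r) (hrE : r ≤ ρ E) : ∃ Y, X ⊆ Y ∧ Y ⊆ E ∧ ρ Y = r := by
  suffices ∀ D ⊆ E, r ≤ ρ (D ∪ X) → ∃ Y, X ⊆ Y ∧ Y ⊆ E ∧ ρ Y = r from
    this E subset_rfl (by rwa [union_eq_left.2 hX])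
  intro D hD hrD
  induction D using Finset.induction_on with
  | empty => exact ⟨X, subset_rfl, hX, by simp at hrD; omega⟩
  | insert a D _ ih =>
    have hDE : D ⊆ E := (subset_insert a D).trans hD
    have haE : a ∈ E := hD (mem_insert_self a D)
    rcases le_or_gt r (ρ (D ∪ X)) with hr | hr
    · exact ih hDE hr
    · refine ⟨insert a (D ∪ X), subset_union_right.trans (subset_insert _ _),
        insert_subset haE (union_subset hDE hX), ?_⟩
      have := (h.2.2 (D ∪ X) (union_subset hDE hX) a haE).2
      rw [insert_union] at hrD
      omega

theorem dual (h : IsDemimatroid E ρ) : IsDemimatroid E (dualFn E ρ) := by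
  refine ⟨by simp [dualFn], fun X hX => ?_, fun X _ x hx => ?_⟩
  · have := (h.rank_union_mem_Icc (sdiff_subset (t := X)) hX (D := X)).2
    rw [union_sdiff_of_subset hX] at this
    simp only [dualFn]
    linarith
  · by_cases hxX : x ∈ X
    · simp [insert_eq_self.2 hxX]
    · have hmem : x ∈ E \ X := mem_sdiff.2 ⟨hx, hxX⟩
      have hstep := h.2.2 ((E \ X).erase x) ((erase_subset x _).trans sdiff_subset) x hx
      rw [insert_erase hmem] at hstep
      simp only [dualFn, sdiff_insert, card_insert_of_notMem hxX]
      push_cast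
      constructor <;> linarith [hstep.1, hstep.2]

theorem dualFn_ground (h : IsDemimatroid E ρ) : dualFn E ρ E = #E - ρ E := by
  simp [dualFn, h.1]

theorem minRank_nonneg (h : IsDemimatroid E ρ) {m : ℕ} (hm : m ≤ #E) : 0 ≤ minRank E ρ m := by
  obtain ⟨X, hX, -, hval⟩ := exists_rank_eq_minRank (ρ := ρ) hm
  exact hval ▸ h.2.1 X hX

theorem minRank_mono (h : IsDemimatroid E ρ) {m m' : ℕ} (hmm' : m ≤ m') (hm' : m' ≤ #E) :
    minRank E ρ m ≤ minRank E ρ m' := by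
  obtain ⟨X, hX, hcX, hvX⟩ := exists_rank_eq_minRank (ρ := ρ) hm'
  obtain ⟨Y, hYX, hcY⟩ := exists_subset_card_eq (hcX ▸ hmm' : m ≤ #X)
  calc minRank E ρ m = minRank E ρ #Y := by rw [hcY]
    _ ≤ ρ Y := minRank_le (hYX.trans hX)
    _ ≤ ρ X := h.rank_mono hYX hX
    _ = minRank E ρ m' := hvX

theorem minRank_succ_le (h : IsDemimatroid E ρ) {m : ℕ} (hm : m < #E) :
    minRank E ρ (m + 1) ≤ minRank E ρ m + 1 := by
  obtain ⟨X, hX, hcX, hvX⟩ := exists_rank_eq_minRank (ρ := ρ) hm.le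
  obtain ⟨x, hx⟩ : (E \ X).Nonempty := by
    rw [← card_pos, card_sdiff_of_subset hX]; omega
  have hxE := (mem_sdiff.1 hx).1
  have := minRank_le (ρ := ρ) (insert_subset hxE hX)
  rw [card_insert_of_notMem (mem_sdiff.1 hx).2, hcX] at this
  linarith [(h.2.2 X hX x hxE).2]

theorem exists_card_eq_upperWeiNumber (h : IsDemimatroid E ρ) {r : ℤ} (hr₀ : 0 ≤ r)
    (hr : r ≤ ρ E) : ∃ X ⊆ E, ρ X = r ∧ #X = upperWeiNumber E ρ r := by
  obtain ⟨X, -, hX, hXr⟩ := h.exists_superset_rank_eq (empty_subset E) (h.1 ▸ hr₀) hr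
  exact Nat.sSup_mem (s := {m | ∃ X ⊆ E, ρ X = r ∧ X.card = m}) ⟨#X, X, hX, hXr, rfl⟩
    (bddAbove_card_of_rank_eq E ρ r)

theorem le_upperWeiNumber_iff (h : IsDemimatroid E ρ) {r : ℤ} (hr₀ : 0 ≤ r) (hr : r ≤ ρ E)
    {m : ℕ} (hm : m ≤ #E) : m ≤ upperWeiNumber E ρ r ↔ minRank E ρ m ≤ r := by
  constructor
  · intro hmd
    obtain ⟨X, hX, hXr, hcX⟩ := h.exists_card_eq_upperWeiNumber hr₀ hr
    calc minRank E ρ m ≤ minRank E ρ #X := h.minRank_mono (hcX ▸ hmd) (card_le_card hX)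
      _ ≤ ρ X := minRank_le hX
      _ = r := hXr
  · intro hmr
    obtain ⟨X, hX, rfl, hvX⟩ := exists_rank_eq_minRank (ρ := ρ) hm
    obtain ⟨Y, hXY, hY, hYr⟩ := h.exists_superset_rank_eq hX (hvX ▸ hmr) hr
    exact (card_le_card hXY).trans (card_le_upperWeiNumber hY hYr)

theorem exists_upperWeiNumber_eq_iff (h : IsDemimatroid E ρ) (j : ℕ) :
    (∃ r, 0 ≤ r ∧ r < ρ E ∧ upperWeiNumber E ρ r = j) ↔ IsRankJump E ρ j := by
  constructor
  · rintro ⟨r, hr₀, hr, rfl⟩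
    set d := upperWeiNumber E ρ r
    have hdn : d < #E := by
      by_contra! hnd
      have := (h.le_upperWeiNumber_iff hr₀ hr.le le_rfl).1 hnd
      rw [minRank_card] at this
      omega
    have hle := (h.le_upperWeiNumber_iff hr₀ hr.le hdn.le).1 le_rfl
    have hlt := mt (h.le_upperWeiNumber_iff hr₀ hr.le (m := d + 1) hdn).2 (by omega)
    exact ⟨hdn, by linarith [h.minRank_succ_le hdn]⟩
  · rintro ⟨hj, hjump⟩
    have hjE := h.minRank_mono (show j + 1 ≤ #E from hj) le_rfl
    rw [minRank_card] at hjE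
    refine ⟨minRank E ρ j, h.minRank_nonneg hj.le, by omega, le_antisymm ?_ ?_⟩
    · by_contra! hjd
      have := (h.le_upperWeiNumber_iff (h.minRank_nonneg hj.le) (by omega) (m := j + 1) hj).1 hjd
      omega
    · exact (h.le_upperWeiNumber_iff (h.minRank_nonneg hj.le) (by omega) hj.le).2 le_rfl

theorem isRankJump_dualFn_iff (h : IsDemimatroid E ρ) {j : ℕ} (hj : j < #E) :
    IsRankJump E (dualFn E ρ) j ↔ ¬IsRankJump E ρ (#E - 1 - j) := by
  obtain ⟨i, hi⟩ : ∃ i, #E = i + 1 + j := ⟨#E - 1 - j, by omega⟩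
  have hmono := h.minRank_mono (Nat.le_add_right i 1) (by omega)
  have hstep := h.minRank_succ_le (m := i) (by omega)
  rw [IsRankJump, IsRankJump, minRank_dualFn hj, minRank_dualFn hj.le,
    show #E - (j + 1) = i by omega, show #E - j = i + 1 by omega, show #E - 1 - j = i by omega]
  simp only [hj, show i < #E by omega, true_and]
  push_cast
  omega

theorem exists_dual_upperWeiNumber_eq_iff (h : IsDemimatroid E ρ) {j : ℕ} (hj : j < #E) :
    (∃ r, 0 ≤ r ∧ r < #E - ρ E ∧ upperWeiNumber E (dualFn E ρ) r = j) ↔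
      ¬IsRankJump E ρ (#E - 1 - j) := by
  rw [← h.dualFn_ground, h.dual.exists_upperWeiNumber_eq_iff, h.isRankJump_dualFn_iff hj]

end IsDemimatroid

end Demimatroid

end WeiDuality

theorem upper_wei_duality {α : Type*} [DecidableEq α]
    (E : Finset α) (ρ : Finset α → ℤ) (h : IsDemimatroid E ρ) :
    {m : ℤ | ∃ r : ℤ, 0 ≤ r ∧ r ≤ ρ E - 1 ∧ m = (upperWeiNumber E ρ r : ℤ) + 1} =
      Set.Icc 1 (E.card : ℤ) \
        {m : ℤ | ∃ r : ℤ, 0 ≤ r ∧ r ≤ (E.card : ℤ) - ρ E - 1 ∧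
          m = (E.card : ℤ) - (upperWeiNumber E (dualFn E ρ) r : ℤ)} := by
  ext i
  simp only [Set.mem_ofPred_eq, Set.mem_sdiff, Set.mem_Icc]
  constructor
  · rintro ⟨r, hr₀, hr, rfl⟩
    set j := upperWeiNumber E ρ r
    have hjump : IsRankJump E ρ j := (h.exists_upperWeiNumber_eq_iff j).1 ⟨r, hr₀, by omega, rfl⟩
    have hjE := hjump.1
    refine ⟨⟨by omega, by omega⟩, fun ⟨s, hs₀, hs, hds⟩ => ?_⟩
    have hflat := (h.exists_dual_upperWeiNumber_eq_iff (j := #E - 1 - j) (by omega)).1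
      ⟨s, hs₀, by omega, by omega⟩
    rw [Nat.sub_sub_self (by omega)] at hflat
    exact hflat hjump
  · rintro ⟨⟨hi₁, hiE⟩, hdual⟩
    obtain ⟨j, rfl⟩ : ∃ j : ℕ, i = j + 1 := ⟨(i - 1).toNat, by omega⟩
    have hjump : IsRankJump E ρ j := by
      by_contra hj
      obtain ⟨s, hs₀, hs, hds⟩ := (h.exists_dual_upperWeiNumber_eq_iff (j := #E - 1 - j)
        (by omega)).2 (by rwa [Nat.sub_sub_self (by omega)])
      exact hdual ⟨s, hs₀, by omega, by omega⟩
    obtain ⟨r, hr₀, hr, hdr⟩ := (h.exists_upperWeiNumber_eq_iff j).2 hjump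
    exact ⟨r, hr₀, by omega, by omega⟩
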